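/- Suppose c satisfies (A0), (A1), (A2), and fix θ ∈ [0,1] and a c-segment {y_θ} with respect to x_m lying in Λ. Let q_θ = −∇_yc(x_m, y_θ), ẏ_θ = (d/dθ)y_θ, and W_θ = {w ∈ ℝⁿ : ⟨w, ẏ_θ⟩ = 0}; for w ∈ W_θ with q_θ + w ∈ dom(c*-Exp_{y_θ}), let x_w = c*-Exp_{y_θ}(q_θ + w) (so x_w ∈ S_θ). Let p_θ(x) = −∇ₓc(x, y_θ) and ṗ_θ(x) = (d/dθ)(−∇ₓc(x, y_θ)). Then for every direction η ∈ W_θ, the second directional derivative in direction η of the function w ↦ (d²/dθ²)f_θ(x_w) equals the c-sectional curvature: D²_{ηη}[(d²/dθ²)f_θ(x_w)] = 𝔖_c(x_w, y_θ)(∂_η x_w, ṗ_θ(x_w)), where ∂_η x_w denotes the directional derivative of w ↦ x_w in direction η. -/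

import Mathlib

open scoped RealInnerProductSpace
open Filter Topology Set

noncomputable section

variable {n : ℕ}

local notation "E" => EuclideanSpace ℝ (Fin n)

/-- `-∇ₓ c(x,y)`, the negative gradient of `x' ↦ c(x',y)` at `x`. -/
def negGradX (c : E → E → ℝ) (x y : E) : E :=
  -(gradient (fun x' => c x' y) x)

/-- `-∇_y c(x,y)`, the negative gradient of `y' ↦ c(x,y')` at `y`. -/
def negGradY (c : E → E → ℝ) (x y : E) : E :=
  -(gradient (fun y' => c x y') y)

/-- The swapped cost `c*(y,x) = c(x,y)`. -/
def cStar (c : E → E → ℝ) : E → E → ℝ := fun y x => c x y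

/-- The domain of the `c`-exponential map at `x`: `{-∇ₓ c(x,y) : y ∈ Λ}`. -/
def cExpDom (c : E → E → ℝ) (Λ : Set E) (x : E) : Set E :=
  (fun y => negGradX c x y) '' Λ

/-- The `c`-exponential map: `cExp c Λ x p` is the point `y ∈ Λ` with `p = -∇ₓ c(x,y)`
(when it exists and is unique). -/
def cExp (c : E → E → ℝ) (Λ : Set E) (x p : E) : E :=
  Function.invFunOn (fun y => negGradX c x y) Λ p

/-- Condition (A0): the cost extends to a `C⁴` function on `cl Ω × cl Λ`. -/
def A0 (c : E → E → ℝ) (Ω Λ : Set E) : Prop :=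
  ContDiffOn ℝ 4 (fun q : E × E => c q.1 q.2) (closure Ω ×ˢ closure Λ)

/-- Condition (A1): injectivity of `y ↦ -∇ₓ c(x,y)` on `cl Λ` and of
`x ↦ -∇_y c(x,y)` on `cl Ω`. -/
def A1 (c : E → E → ℝ) (Ω Λ : Set E) : Prop :=
  (∀ x ∈ Ω, Set.InjOn (fun y => negGradX c x y) (closure Λ)) ∧
  (∀ y ∈ Λ, Set.InjOn (fun x => negGradY c x y) (closure Ω))

/-- Condition (A2): the mixed second derivative `D²ₓᵧ c(x,y)`, as a linear map, is
invertible for all `(x,y) ∈ cl Ω × cl Λ`. -/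
def A2 (c : E → E → ℝ) (Ω Λ : Set E) : Prop :=
  ∀ x ∈ closure Ω, ∀ y ∈ closure Λ,
    Function.Bijective (fderiv ℝ (fun y' => negGradX c x y') y)

/-- The `c`-sectional curvature
`𝔖_c(x,y)(η,ξ) = (d²/dt²)|₀ [-D²ₓₓ c](x, cExpₓ(p + tξ))(η,η)` with `p = -∇ₓ c(x,y)`. -/
def cSectional (c : E → E → ℝ) (Λ : Set E) (x y η ξ : E) : ℝ :=
  deriv (deriv (fun t : ℝ =>
    -(iteratedFDeriv ℝ 2
        (fun x' => c x' (cExp c Λ x (negGradX c x y + t • ξ))) x ![η, η]))) 0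

/-- Condition (A3W): nonnegative `c`-sectional curvature in orthogonal directions. -/
def A3W (c : E → E → ℝ) (Ω Λ : Set E) : Prop :=
  ∀ x ∈ Ω, ∀ y ∈ Λ, ∀ η ξ : E, ⟪η, ξ⟫ = 0 → 0 ≤ cSectional c Λ x y η ξ

/-- Condition (A3S): uniformly positive `c`-sectional curvature in orthogonal directions. -/
def A3S (c : E → E → ℝ) (Ω Λ : Set E) : Prop :=
  ∃ C₀ > (0:ℝ), ∀ x ∈ Ω, ∀ y ∈ Λ, ∀ η ξ : E, ⟪η, ξ⟫ = 0 →
    C₀ * ‖η‖ ^ 2 * ‖ξ‖ ^ 2 ≤ cSectional c Λ x y η ξ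

/-- `Λ` is `c`-convex with respect to `Ω`: `(cExpₓ)⁻¹(Λ)` is convex for every `x ∈ Ω`. -/
def CConvexTarget (c : E → E → ℝ) (Ω Λ : Set E) : Prop :=
  ∀ x ∈ Ω, Convex ℝ (cExpDom c Λ x)

/-- `Ω` is `c*`-convex with respect to `Λ`: `(c*Exp_y)⁻¹(Ω)` is convex for every `y ∈ Λ`. -/
def CStarConvexSource (c : E → E → ℝ) (Ω Λ : Set E) : Prop :=
  ∀ y ∈ Λ, Convex ℝ ((fun x => negGradY c x y) '' Ω)

/-- The `c`-Legendre transform `L^c v(x) = sup_{y ∈ Λ} (-c(x,y) - v(y))`. -/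
def cTransform (c : E → E → ℝ) (Λ : Set E) (v : E → EReal) (x : E) : EReal :=
  ⨆ y ∈ Λ, (((-(c x y) : ℝ) : EReal) - v y)

/-- `φ` is a `c`-convex function on `Ω` indexed by `Λ`. -/
def IsCConvexOn (c : E → E → ℝ) (Ω Λ : Set E) (φ : E → ℝ) : Prop :=
  ∃ v : E → EReal,
    (∀ x ∈ Ω, (φ x : EReal) = cTransform c Λ v x) ∧
    (∀ x ∈ Ω, ∃ y ∈ closure Λ, (φ x : EReal) + v y = ((-(c x y) : ℝ) : EReal))

/-- The `c*`-Legendre transform `L^{c*} φ(y) = sup_{x ∈ Ω} (-c(x,y) - φ(x))`. -/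
def cStarTransform (c : E → E → ℝ) (Ω : Set E) (φ : E → ℝ) (y : E) : EReal :=
  ⨆ x ∈ Ω, (((-(c x y) - φ x : ℝ)) : EReal)

/-- The contact set `G_φ(x) = {y ∈ cl Λ : φ(x) + L^{c*}φ(y) = -c(x,y)}`. -/
def contactSet (c : E → E → ℝ) (Ω Λ : Set E) (φ : E → ℝ) (x : E) : Set E :=
  {y ∈ closure Λ | (φ x : EReal) + cStarTransform c Ω φ y = ((-(c x y) : ℝ) : EReal)}

/-- The (local) subdifferential `∂φ(x)`:
`φ(z) ≥ φ(x) + ⟨p, z - x⟩ + o(‖z - x‖)` as `z → x` in `Ω`. -/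
def subdiff (Ω : Set E) (φ : E → ℝ) (x : E) : Set E :=
  {p : E | ∀ ε > (0:ℝ), ∀ᶠ z in 𝓝[Ω] x,
      φ x + ⟪p, z - x⟫ - ε * ‖z - x‖ ≤ φ z}

/-- The `c`-subdifferential `∂^c φ(x) = {-∇ₓ c(x,y) : y ∈ G_φ(x)}`. -/
def cSubdiff (c : E → E → ℝ) (Ω Λ : Set E) (φ : E → ℝ) (x : E) : Set E :=
  (fun y => negGradX c x y) '' contactSet c Ω Λ φ x

/-- The straight segment `p_θ = (1-θ) p₀ + θ p₁` with `pᵢ = -∇ₓ c(x_m, yᵢ)`. -/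
def pSeg (c : E → E → ℝ) (xm y₀ y₁ : E) (θ : ℝ) : E :=
  (1 - θ) • negGradX c xm y₀ + θ • negGradX c xm y₁

/-- The `c`-segment `y_θ = cExp_{x_m}(p_θ)` joining `y₀` to `y₁` with respect to `x_m`. -/
def ySeg (c : E → E → ℝ) (Λ : Set E) (xm y₀ y₁ : E) (θ : ℝ) : E :=
  cExp c Λ xm (pSeg c xm y₀ y₁ θ)

/-- The sliding mountain `f_θ(x) = -c(x, y_θ) + c(x_m, y_θ)`. -/
def slide (c : E → E → ℝ) (Λ : Set E) (xm y₀ y₁ : E) (θ : ℝ) (x : E) : ℝ :=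
  -(c x (ySeg c Λ xm y₀ y₁ θ)) + c xm (ySeg c Λ xm y₀ y₁ θ)

/-- The `c`-segment `[y₀,y₁]_{x_m}` lies in `Λ`:
each `p_θ`, `θ ∈ [0,1]`, is in the domain of `cExp_{x_m}`. -/
def segInTarget (c : E → E → ℝ) (Λ : Set E) (xm y₀ y₁ : E) : Prop :=
  ∀ θ ∈ Set.Icc (0:ℝ) 1, pSeg c xm y₀ y₁ θ ∈ cExpDom c Λ xm

/-- The level set `S_θ = {x ∈ Ω : (d/dθ) f_θ(x) = 0}`. -/
def Slevel (c : E → E → ℝ) (Ω Λ : Set E) (xm y₀ y₁ : E) (θ : ℝ) : Set E :=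
  {x ∈ Ω | deriv (fun θ' => slide c Λ xm y₀ y₁ θ' x) θ = 0}

/-- The super-level set `S⁺_θ = {x ∈ Ω : (d/dθ) f_θ(x) ≥ 0}`. -/
def Splus (c : E → E → ℝ) (Ω Λ : Set E) (xm y₀ y₁ : E) (θ : ℝ) : Set E :=
  {x ∈ Ω | 0 ≤ deriv (fun θ' => slide c Λ xm y₀ y₁ θ' x) θ}

/-!
Write `Φ(x, y) = c(x, y)`. Through `(x_w, y_θ)` run two curves: the `c*`-segment
`X(s) = x_{w+sη}`, along which `-∇_y c(X(s), y_θ) = q_θ + w + sη` is affine, and the `c`-segment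
`Y(t) = c-Exp_{x_w}(p_θ(x_w) + t ṗ_θ(x_w))`, along which `-∇ₓ c(x_w, Y(t))` is affine; their
velocities are `u = ∂_η x_w` and `ẏ_θ`. Up to a term affine in `s`, `(d²/dθ²) f_θ(X(s))` is
`-D²_yy Φ(X(s), y_θ)(ẏ_θ, ẏ_θ)`, while `𝔖_c = -(d²/dt²) D²ₓₓ Φ(x_w, Y(t))(u, u)`. By the chain rule
the two second derivatives are `Φ_xxyy(u, u, ẏ, ẏ) + Φ_xyy(X'', ẏ, ẏ)` and
`Φ_yyxx(ẏ, ẏ, u, u) + Φ_yxx(Y'', u, u)`; differentiating the two affine relations twice turns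
both correction terms into `-Φ_xy(X'', Y'')`, and the fourth derivatives agree by symmetry.
-/

open Function

section SecondDerivative

variable {F : Type*} [NormedAddCommGroup F] [NormedSpace ℝ F]

lemma deriv_deriv_eq_iteratedDeriv_two (f : ℝ → F) : deriv (deriv f) = iteratedDeriv 2 f := by
  rw [iteratedDeriv_eq_iterate]; rfl

lemma deriv_deriv_neg (f : ℝ → F) (t : ℝ) :
    deriv (deriv fun s => -f s) t = -deriv (deriv f) t := by
  simp [deriv_deriv_eq_iteratedDeriv_two]

lemma deriv_deriv_eq_zero_of_eventuallyEq_affine {f : ℝ → ℝ} {t a b : ℝ}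
    (h : f =ᶠ[𝓝 t] fun s => a + s * b) : deriv (deriv f) t = 0 := by
  rw [h.deriv.deriv_eq]
  simp

lemma deriv_deriv_add_affine {f : ℝ → ℝ} {t : ℝ} (hf : ContDiffAt ℝ 2 f t) (a b : ℝ) :
    deriv (deriv fun s => f s + (a + s * b)) t = deriv (deriv f) t := by
  have haff : ContDiffAt ℝ 2 (fun s : ℝ => a + s * b) t := by fun_prop
  simp only [deriv_deriv_eq_iteratedDeriv_two]
  rw [iteratedDeriv_fun_add hf haff, ← deriv_deriv_eq_iteratedDeriv_two (fun s => a + s * b),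
    deriv_deriv_eq_zero_of_eventuallyEq_affine .rfl, add_zero]

lemma HasDerivAt.fderiv_apply_eq_of_eventually_eq_line {V : Type*} [NormedAddCommGroup V]
    [NormedSpace ℝ V] {G : V → F} {γ : ℝ → V} {γ' y : V} {p ξ : F} (hγ : HasDerivAt γ γ' 0)
    (hγ₀ : γ 0 = y) (hG : DifferentiableAt ℝ G y) (h : ∀ᶠ t in 𝓝 0, G (γ t) = p + t • ξ) :
    fderiv ℝ G y γ' = ξ := by
  subst hγ₀
  have hline : HasDerivAt (fun t : ℝ => p + t • ξ) ξ 0 := by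
    simpa using ((hasDerivAt_id (0 : ℝ)).smul_const ξ).const_add p
  exact (hG.hasFDerivAt.comp_hasDerivAt 0 hγ).unique (hline.congr_of_eventuallyEq h)

end SecondDerivative

section DirDeriv

variable {G : Type*} [NormedAddCommGroup G] [NormedSpace ℝ G] {f g : G → ℝ} {z : G}

def dirDeriv (v : G) (f : G → ℝ) : G → ℝ := fun z => fderiv ℝ f z v

lemma ContDiffAt.dirDeriv {k m : WithTop ℕ∞} (hf : ContDiffAt ℝ m f z) (h : k + 1 ≤ m) (v : G) :
    ContDiffAt ℝ k (dirDeriv v f) z :=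
  (hf.fderiv_right h).clm_apply contDiffAt_const

lemma dirDeriv_congr (h : f =ᶠ[𝓝 z] g) (v : G) : dirDeriv v f z = dirDeriv v g z := by
  simp only [dirDeriv, h.fderiv_eq]

lemma dirDeriv_dirDeriv (hf : ContDiffAt ℝ 2 f z) (v w : G) :
    dirDeriv v (dirDeriv w f) z = fderiv ℝ (fderiv ℝ f) z v w := by
  have hdf : DifferentiableAt ℝ (fderiv ℝ f) z :=
    (hf.fderiv_right (m := 1) le_rfl).differentiableAt one_ne_zero
  change fderiv ℝ (fun z' => fderiv ℝ f z' w) z v = _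
  simp [fderiv_clm_apply hdf (differentiableAt_const w)]

lemma dirDeriv_comm (hf : ContDiffAt ℝ 2 f z) (v w : G) :
    dirDeriv v (dirDeriv w f) z = dirDeriv w (dirDeriv v f) z := by
  rw [dirDeriv_dirDeriv hf, dirDeriv_dirDeriv hf]
  exact hf.isSymmSndFDerivAt (by simp) v w

lemma dirDeriv_rotate (hf : ContDiffAt ℝ 3 f z) (u v w : G) :
    dirDeriv u (dirDeriv v (dirDeriv w f)) z = dirDeriv v (dirDeriv w (dirDeriv u f)) z := by
  have hf2 : ∀ᶠ z' in 𝓝 z, ContDiffAt ℝ 2 f z' :=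
    (hf.of_le (by norm_num)).eventually (by simp)
  rw [dirDeriv_comm (hf.dirDeriv (by norm_num) w)]
  exact dirDeriv_congr (hf2.mono fun z' h => dirDeriv_comm h u w) v

lemma deriv_deriv_comp_eq_dirDeriv {γ : ℝ → G} {t : ℝ} (hγ : ContDiffAt ℝ 2 γ t)
    (hf : ContDiffAt ℝ 2 f (γ t)) :
    deriv (deriv fun s => f (γ s)) t =
      dirDeriv (deriv γ t) (dirDeriv (deriv γ t) f) (γ t) +
        dirDeriv (deriv (deriv γ) t) f (γ t) := by
  rw [deriv_deriv_eq_iteratedDeriv_two, deriv_deriv_eq_iteratedDeriv_two γ, dirDeriv_dirDeriv hf,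
    ← iteratedFDeriv_two_apply (𝕜 := ℝ) f (γ t) fun _ => deriv γ t]
  exact iteratedDeriv_vcomp_two hf hγ

end DirDeriv

section Prod

variable {E₁ E₂ : Type*} [NormedAddCommGroup E₁] [NormedSpace ℝ E₁]
  [NormedAddCommGroup E₂] [NormedSpace ℝ E₂] {Φ : E₁ × E₂ → ℝ}

lemma dirDeriv_comp_prodMk_left {x : E₁} {y : E₂} (hΦ : DifferentiableAt ℝ Φ (x, y)) (m : E₁) :
    dirDeriv m (fun x' => Φ (x', y)) x = dirDeriv (m, 0) Φ (x, y) := by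
  change fderiv ℝ (Φ ∘ fun x' => (x', y)) x m = _
  rw [(hΦ.hasFDerivAt.comp x (hasFDerivAt_prodMk_left x y)).fderiv]
  rfl

lemma dirDeriv_comp_prodMk_right {x : E₁} {y : E₂} (hΦ : DifferentiableAt ℝ Φ (x, y)) (m : E₂) :
    dirDeriv m (fun y' => Φ (x, y')) y = dirDeriv (0, m) Φ (x, y) := by
  change fderiv ℝ (Φ ∘ fun y' => (x, y')) y m = _
  rw [(hΦ.hasFDerivAt.comp y (hasFDerivAt_prodMk_right x y)).fderiv]
  rfl

lemma deriv_deriv_prodMk {X : ℝ → E₁} {Y : ℝ → E₂} {t : ℝ} (hX : ContDiffAt ℝ 2 X t)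
    (hY : ContDiffAt ℝ 2 Y t) :
    deriv (fun s => (X s, Y s)) t = (deriv X t, deriv Y t) ∧
      deriv (deriv fun s => (X s, Y s)) t = (deriv (deriv X) t, deriv (deriv Y) t) := by
  have hpair : ∀ {X : ℝ → E₁} {Y : ℝ → E₂} {s}, DifferentiableAt ℝ X s → DifferentiableAt ℝ Y s →
      deriv (fun s => (X s, Y s)) s = (deriv X s, deriv Y s) :=
    fun hX hY => (hX.hasDerivAt.prodMk hY.hasDerivAt).deriv
  have hev : deriv (fun s => (X s, Y s)) =ᶠ[𝓝 t] fun s => (deriv X s, deriv Y s) :=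
    ((hX.eventually (by simp)).and (hY.eventually (by simp))).mono fun s h =>
      hpair (h.1.differentiableAt two_ne_zero) (h.2.differentiableAt two_ne_zero)
  refine ⟨hev.eq_of_nhds, ?_⟩
  rw [hev.deriv_eq]
  exact hpair ((hX.derivWithin (m := 1) le_rfl).differentiableAt one_ne_zero)
    ((hY.derivWithin (m := 1) le_rfl).differentiableAt one_ne_zero)

lemma deriv_deriv_comp_prodMk {X : ℝ → E₁} {Y : ℝ → E₂} {t : ℝ} (hX : ContDiffAt ℝ 2 X t)
    (hY : ContDiffAt ℝ 2 Y t) (hΦ : ContDiffAt ℝ 2 Φ (X t, Y t)) :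
    deriv (deriv fun s => Φ (X s, Y s)) t =
      dirDeriv (deriv X t, deriv Y t) (dirDeriv (deriv X t, deriv Y t) Φ) (X t, Y t) +
        dirDeriv (deriv (deriv X) t, deriv (deriv Y) t) Φ (X t, Y t) := by
  obtain ⟨h₁, h₂⟩ := deriv_deriv_prodMk hX hY
  rw [deriv_deriv_comp_eq_dirDeriv (hX.prodMk hY) hΦ, h₁, h₂]

lemma deriv_deriv_comp_prodMk_left {X : ℝ → E₁} {y : E₂} {t : ℝ} (hX : ContDiffAt ℝ 2 X t)
    (hΦ : ContDiffAt ℝ 2 Φ (X t, y)) :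
    deriv (deriv fun s => Φ (X s, y)) t =
      dirDeriv (deriv X t, 0) (dirDeriv (deriv X t, 0) Φ) (X t, y) +
        dirDeriv (deriv (deriv X) t, 0) Φ (X t, y) := by
  simpa using deriv_deriv_comp_prodMk hX contDiffAt_const hΦ

lemma deriv_deriv_comp_prodMk_right {x : E₁} {Y : ℝ → E₂} {t : ℝ} (hY : ContDiffAt ℝ 2 Y t)
    (hΦ : ContDiffAt ℝ 2 Φ (x, Y t)) :
    deriv (deriv fun s => Φ (x, Y s)) t =
      dirDeriv (0, deriv Y t) (dirDeriv (0, deriv Y t) Φ) (x, Y t) +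
        dirDeriv (0, deriv (deriv Y) t) Φ (x, Y t) := by
  simpa using deriv_deriv_comp_prodMk contDiffAt_const hY hΦ

theorem deriv_deriv_hessian_swap {X : ℝ → E₁} {Y : ℝ → E₂} {x₀ : E₁} {y₀ : E₂} {u : E₁} {v : E₂}
    (hX : ContDiffAt ℝ 2 X 0) (hY : ContDiffAt ℝ 2 Y 0) (hX₀ : X 0 = x₀) (hY₀ : Y 0 = y₀)
    (hu : deriv X 0 = u) (hv : deriv Y 0 = v) (hΦ : ContDiffAt ℝ 4 Φ (x₀, y₀))
    (hXstraight : ∀ m, deriv (deriv fun s => dirDeriv (0, m) Φ (X s, y₀)) 0 = 0)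
    (hYstraight : ∀ m, deriv (deriv fun t => dirDeriv (m, 0) Φ (x₀, Y t)) 0 = 0) :
    deriv (deriv fun s => dirDeriv (0, v) (dirDeriv (0, v) Φ) (X s, y₀)) 0 =
      deriv (deriv fun t => dirDeriv (u, 0) (dirDeriv (u, 0) Φ) (x₀, Y t)) 0 := by
  subst hX₀ hY₀ hu hv
  set u : E₁ × E₂ := (deriv X 0, 0)
  set a : E₁ × E₂ := (deriv (deriv X) 0, 0)
  set v : E₁ × E₂ := (0, deriv Y 0)
  set b : E₁ × E₂ := (0, deriv (deriv Y) 0)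
  have hΦ3 : ContDiffAt ℝ 3 Φ (X 0, Y 0) := hΦ.of_le (by norm_num)
  have hD2 : ∀ p q, ContDiffAt ℝ 2 (dirDeriv p (dirDeriv q Φ)) (X 0, Y 0) := fun p q =>
    (hΦ.dirDeriv (k := 3) (by norm_num) q).dirDeriv (by norm_num) p
  have hD1 : ∀ p, ContDiffAt ℝ 2 (dirDeriv p Φ) (X 0, Y 0) := fun p =>
    hΦ.dirDeriv (by norm_num) p
  have hXm : ∀ m, dirDeriv u (dirDeriv u (dirDeriv (0, m) Φ)) (X 0, Y 0) +
      dirDeriv a (dirDeriv (0, m) Φ) (X 0, Y 0) = 0 := fun m =>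
    (deriv_deriv_comp_prodMk_left hX (hD1 _)).symm.trans (hXstraight m)
  have hYm : ∀ m, dirDeriv v (dirDeriv v (dirDeriv (m, 0) Φ)) (X 0, Y 0) +
      dirDeriv b (dirDeriv (m, 0) Φ) (X 0, Y 0) = 0 := fun m =>
    (deriv_deriv_comp_prodMk_right hY (hD1 _)).symm.trans (hYstraight m)
  have hswap4 : dirDeriv u (dirDeriv u (dirDeriv v (dirDeriv v Φ))) (X 0, Y 0) =
      dirDeriv v (dirDeriv v (dirDeriv u (dirDeriv u Φ))) (X 0, Y 0) := by
    have hΦ3' : ∀ᶠ z in 𝓝 (X 0, Y 0), ContDiffAt ℝ 3 Φ z :=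
      (hΦ.eventually (by simp)).mono fun z h => h.of_le (by norm_num)
    rw [dirDeriv_congr (hΦ3'.mono fun z h => dirDeriv_rotate h u v v) u]
    exact dirDeriv_rotate (hΦ.dirDeriv (by norm_num) u) u v v
  rw [deriv_deriv_comp_prodMk_left hX (hD2 _ _), deriv_deriv_comp_prodMk_right hY (hD2 _ _)]
  -- `hXm` and `hYm` turn both third-order correction terms into `-∂_a ∂_b Φ`.
  linear_combination hswap4 + dirDeriv_rotate hΦ3 a v v - dirDeriv_rotate hΦ3 b u u
    + hYm (deriv (deriv X) 0) - hXm (deriv (deriv Y) 0) + dirDeriv_comm (hΦ.of_le (by norm_num)) a b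

end Prod

section InverseFunction

variable {V W : Type*} [NormedAddCommGroup V] [NormedSpace ℝ V] [CompleteSpace V]
  [NormedAddCommGroup W] [NormedSpace ℝ W] [CompleteSpace W] {Φ : V → W} {S : Set V} {a : V}
  {k : WithTop ℕ∞}

lemma ContDiffAt.exists_hasStrictFDerivAt_equiv (hΦ : ContDiffAt ℝ k Φ a) (hk : k ≠ 0)
    (hbij : Bijective (fderiv ℝ Φ a)) : ∃ L : V ≃L[ℝ] W, HasStrictFDerivAt Φ (L : V →L[ℝ] W) a :=
  ⟨.ofBijective _ (LinearMap.ker_eq_bot.2 hbij.1) (LinearMap.range_eq_top.2 hbij.2), by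
    rw [ContinuousLinearEquiv.coe_ofBijective]
    exact hΦ.hasStrictFDerivAt' (hΦ.differentiableAt hk).hasFDerivAt hk⟩

lemma eventually_apply_invFunOn (hS : S ∈ 𝓝 a) (hΦ : ContDiffAt ℝ k Φ a) (hk : k ≠ 0)
    (hbij : Bijective (fderiv ℝ Φ a)) :
    ∀ᶠ z in 𝓝 (Φ a), Φ (invFunOn Φ S z) = z ∧ invFunOn Φ S z ∈ S := by
  obtain ⟨L, hL⟩ := hΦ.exists_hasStrictFDerivAt_equiv hk hbij
  have himage : Φ '' S ∈ 𝓝 (Φ a) := hL.map_nhds_eq_of_equiv ▸ image_mem_map hS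
  filter_upwards [himage] with z ⟨x, hx, hxz⟩
  exact ⟨invFunOn_eq ⟨x, hx, hxz⟩, invFunOn_mem ⟨x, hx, hxz⟩⟩

lemma ContDiffAt.invFunOn (hS : S ∈ 𝓝 a) (hinj : InjOn Φ S) (hΦ : ContDiffAt ℝ k Φ a)
    (hk : k ≠ 0) (hbij : Bijective (fderiv ℝ Φ a)) : ContDiffAt ℝ k (invFunOn Φ S) (Φ a) := by
  obtain ⟨L, hL⟩ := hΦ.exists_hasStrictFDerivAt_equiv hk hbij
  exact (hΦ.to_localInverse hL.hasFDerivAt hk).congr_of_eventuallyEq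
    (hL.localInverse_unique (Filter.mem_of_superset hS fun x hx => hinj.leftInvOn_invFunOn hx))

end InverseFunction

section InnerProduct

variable {H : Type*} [NormedAddCommGroup H] [InnerProductSpace ℝ H]

lemma contDiffAt_gradient_of_uncurry [CompleteSpace H] {V : Type*} [NormedAddCommGroup V]
    [NormedSpace ℝ V] {f : V → H → ℝ} {p : V} {x : H} {k : WithTop ℕ∞}
    (hf : ContDiffAt ℝ (k + 1) (uncurry f) (p, x)) :
    ContDiffAt ℝ k (fun p' => gradient (f p') x) p :=
  (InnerProductSpace.toDual ℝ H).symm.contDiff.comp_contDiffAt p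
    (hf.fderiv (g := fun _ => x) contDiffAt_const le_rfl)

lemma inner_fderiv_apply_eq_dirDeriv {V : Type*} [NormedAddCommGroup V] [NormedSpace ℝ V]
    {A : V → H} {x : V} (hA : DifferentiableAt ℝ A x) (u : V) (m : H) :
    ⟪fderiv ℝ A x u, m⟫ = dirDeriv u (fun x' => ⟪A x', m⟫) x := by
  simp [dirDeriv, fderiv_inner_apply ℝ hA (differentiableAt_const m)]

lemma bijective_of_inner_transpose [FiniteDimensional ℝ H] {A B : H →L[ℝ] H}
    (hAB : ∀ u m, ⟪A u, m⟫ = ⟪B m, u⟫) (hB : Surjective B) : Bijective A := by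
  have hinj : Injective A := by
    refine (injective_iff_map_eq_zero A).2 fun u hu => ?_
    obtain ⟨m, rfl⟩ := hB u
    rw [← inner_self_eq_zero (𝕜 := ℝ), ← hAB, hu, inner_zero_left]
  exact ⟨hinj, LinearMap.injective_iff_surjective.1 hinj⟩

end InnerProduct

section Cost

variable {c : EuclideanSpace ℝ (Fin n) → EuclideanSpace ℝ (Fin n) → ℝ}
  {Ω Λ : Set (EuclideanSpace ℝ (Fin n))} {x y : EuclideanSpace ℝ (Fin n)}

lemma A0.contDiffAt (h0 : A0 c Ω Λ) (hΩ : IsOpen Ω) (hΛ : IsOpen Λ) (hx : x ∈ Ω) (hy : y ∈ Λ) :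
    ContDiffAt ℝ 4 (uncurry c) (x, y) :=
  ContDiffOn.contDiffAt h0 (mem_of_superset ((hΩ.prod hΛ).mem_nhds ⟨hx, hy⟩)
    (prod_mono subset_closure subset_closure))

lemma inner_negGradX (hc : DifferentiableAt ℝ (uncurry c) (x, y)) (m : E) :
    ⟪negGradX c x y, m⟫ = -dirDeriv (m, 0) (uncurry c) (x, y) := by
  rw [negGradX, gradient, inner_neg_left, InnerProductSpace.toDual_symm_apply,
    ← dirDeriv_comp_prodMk_left hc]
  rfl

lemma inner_negGradY (hc : DifferentiableAt ℝ (uncurry c) (x, y)) (m : E) :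
    ⟪negGradY c x y, m⟫ = -dirDeriv (0, m) (uncurry c) (x, y) := by
  rw [negGradY, gradient, inner_neg_left, InnerProductSpace.toDual_symm_apply,
    ← dirDeriv_comp_prodMk_right hc]
  rfl

lemma ContDiffAt.uncurry_cStar {k : WithTop ℕ∞} (hc : ContDiffAt ℝ k (uncurry c) (x, y)) :
    ContDiffAt ℝ k (uncurry (cStar c)) (y, x) :=
  hc.comp (y, x) (contDiffAt_snd.prodMk contDiffAt_fst)

lemma contDiffAt_negGradX_right {k : WithTop ℕ∞} (hc : ContDiffAt ℝ (k + 1) (uncurry c) (x, y)) :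
    ContDiffAt ℝ k (fun y' => negGradX c x y') y :=
  (contDiffAt_gradient_of_uncurry (f := cStar c) hc.uncurry_cStar).neg

lemma contDiffAt_negGradY_left {k : WithTop ℕ∞} (hc : ContDiffAt ℝ (k + 1) (uncurry c) (x, y)) :
    ContDiffAt ℝ k (fun x' => negGradY c x' y) x :=
  (contDiffAt_gradient_of_uncurry hc).neg

lemma inner_fderiv_negGradY_left (hc : ContDiffAt ℝ 2 (uncurry c) (x, y)) (u m : E) :
    ⟪fderiv ℝ (fun x' => negGradY c x' y) x u, m⟫ =
      -dirDeriv (u, 0) (dirDeriv (0, m) (uncurry c)) (x, y) := by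
  have hd : ∀ᶠ x' in 𝓝 x, DifferentiableAt ℝ (uncurry c) (x', y) :=
    (continuousAt_id.prodMk continuousAt_const).eventually
      ((hc.eventually (by simp)).mono fun _ h => h.differentiableAt two_ne_zero)
  rw [inner_fderiv_apply_eq_dirDeriv
      ((contDiffAt_negGradY_left (k := 1) hc).differentiableAt one_ne_zero),
    dirDeriv_congr (hd.mono fun x' h => inner_negGradY h m),
    ← dirDeriv_comp_prodMk_left ((hc.dirDeriv (k := 1) le_rfl _).differentiableAt one_ne_zero)]
  simp [dirDeriv, fderiv_fun_neg]

lemma inner_fderiv_negGradX_right (hc : ContDiffAt ℝ 2 (uncurry c) (x, y)) (u m : E) :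
    ⟪fderiv ℝ (fun y' => negGradX c x y') y m, u⟫ =
      -dirDeriv (0, m) (dirDeriv (u, 0) (uncurry c)) (x, y) := by
  have hd : ∀ᶠ y' in 𝓝 y, DifferentiableAt ℝ (uncurry c) (x, y') :=
    (continuousAt_const.prodMk continuousAt_id).eventually
      ((hc.eventually (by simp)).mono fun _ h => h.differentiableAt two_ne_zero)
  rw [inner_fderiv_apply_eq_dirDeriv
      ((contDiffAt_negGradX_right (k := 1) hc).differentiableAt one_ne_zero),
    dirDeriv_congr (hd.mono fun y' h => inner_negGradX h u),
    ← dirDeriv_comp_prodMk_right ((hc.dirDeriv (k := 1) le_rfl _).differentiableAt one_ne_zero)]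
  simp [dirDeriv, fderiv_fun_neg]

lemma bijective_fderiv_negGradY_left (hc : ContDiffAt ℝ 2 (uncurry c) (x, y))
    (hbij : Bijective (fderiv ℝ (fun y' => negGradX c x y') y)) :
    Bijective (fderiv ℝ (fun x' => negGradY c x' y) x) :=
  bijective_of_inner_transpose (fun u m => by
    rw [inner_fderiv_negGradY_left hc, inner_fderiv_negGradX_right hc, dirDeriv_comm hc]) hbij.2

lemma deriv_deriv_cost_right {Y : ℝ → E} {t : ℝ} (hY : ContDiffAt ℝ 2 Y t)
    (hc : ContDiffAt ℝ 2 (uncurry c) (x, Y t)) :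
    deriv (deriv fun s => c x (Y s)) t =
      dirDeriv (0, deriv Y t) (dirDeriv (0, deriv Y t) (uncurry c)) (x, Y t) -
        ⟪negGradY c x (Y t), deriv (deriv Y) t⟫ := by
  rw [inner_negGradY (hc.differentiableAt two_ne_zero), sub_neg_eq_add]
  exact deriv_deriv_comp_prodMk_right (Φ := uncurry c) hY hc

lemma iteratedFDeriv_two_cost_left (hc : ContDiffAt ℝ 2 (uncurry c) (x, y)) (u : E) :
    iteratedFDeriv ℝ 2 (fun x' => c x' y) x ![u, u] =
      dirDeriv (u, 0) (dirDeriv (u, 0) (uncurry c)) (x, y) := by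
  have hpair : ContDiffAt ℝ 2 (fun x' : E => (x', y)) x := contDiffAt_id.prodMk contDiffAt_const
  have hd : ∀ᶠ x' in 𝓝 x, DifferentiableAt ℝ (uncurry c) (x', y) :=
    hpair.continuousAt.eventually
      ((hc.eventually (by simp)).mono fun _ h => h.differentiableAt two_ne_zero)
  rw [iteratedFDeriv_two_apply]
  simp only [Matrix.cons_val_zero, Matrix.cons_val_one, Matrix.cons_val_fin_one]
  have hcx : ContDiffAt ℝ 2 (fun x' => c x' y) x := ContDiffAt.comp (g := uncurry c) x hc hpair
  rw [← dirDeriv_dirDeriv hcx]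
  calc dirDeriv u (dirDeriv u fun x' => c x' y) x
      = dirDeriv u (fun x' => dirDeriv (u, 0) (uncurry c) (x', y)) x :=
        dirDeriv_congr (hd.mono fun x' h => dirDeriv_comp_prodMk_left h u) u
    _ = _ := dirDeriv_comp_prodMk_left
        ((hc.dirDeriv (k := 1) le_rfl _).differentiableAt one_ne_zero) u

lemma deriv_deriv_dirDeriv_eq_zero_of_negGradY_line {X : ℝ → E} {p η : E}
    (hX : ∀ᶠ s in 𝓝 0, negGradY c (X s) y = p + s • η ∧ DifferentiableAt ℝ (uncurry c) (X s, y))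
    (m : E) : deriv (deriv fun s => dirDeriv (0, m) (uncurry c) (X s, y)) 0 = 0 := by
  refine deriv_deriv_eq_zero_of_eventuallyEq_affine (a := -⟪p, m⟫) (b := -⟪η, m⟫) ?_
  filter_upwards [hX] with s ⟨hline, hd⟩
  rw [← neg_neg (dirDeriv _ _ _), ← inner_negGradY hd, hline, inner_add_left, inner_smul_left]
  simp; ring

lemma deriv_deriv_dirDeriv_eq_zero_of_negGradX_line {Y : ℝ → E} {p ξ : E}
    (hY : ∀ᶠ t in 𝓝 0, negGradX c x (Y t) = p + t • ξ ∧ DifferentiableAt ℝ (uncurry c) (x, Y t))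
    (m : E) : deriv (deriv fun t => dirDeriv (m, 0) (uncurry c) (x, Y t)) 0 = 0 := by
  refine deriv_deriv_eq_zero_of_eventuallyEq_affine (a := -⟪p, m⟫) (b := -⟪ξ, m⟫) ?_
  filter_upwards [hY] with t ⟨hline, hd⟩
  rw [← neg_neg (dirDeriv _ _ _), ← inner_negGradX hd, hline, inner_add_left, inner_smul_left]
  simp; ring

lemma deriv_negGradX_comp {Y : ℝ → E} {t : ℝ} (hc : ContDiffAt ℝ 2 (uncurry c) (x, Y t))
    (hY : DifferentiableAt ℝ Y t) :
    deriv (fun s => negGradX c x (Y s)) t =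
      fderiv ℝ (fun y' => negGradX c x y') (Y t) (deriv Y t) :=
  fderiv_comp_deriv t ((contDiffAt_negGradX_right (k := 1) hc).differentiableAt one_ne_zero) hY

end Cost

/-- The `c`-segment `t ↦ c-Expₓ(-∇ₓc(x, y) + t ξ)` through `y`. -/
def cLine (c : E → E → ℝ) (Λ : Set E) (x y ξ : E) (t : ℝ) : E :=
  cExp c Λ x (negGradX c x y + t • ξ)

section CExp

variable {c : EuclideanSpace ℝ (Fin n) → EuclideanSpace ℝ (Fin n) → ℝ}
  {Λ : Set (EuclideanSpace ℝ (Fin n))} {x y : EuclideanSpace ℝ (Fin n)}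

lemma mem_and_negGradX_cExp {p : E} (hp : p ∈ cExpDom c Λ x) :
    cExp c Λ x p ∈ Λ ∧ negGradX c x (cExp c Λ x p) = p :=
  ⟨invFunOn_mem hp, invFunOn_eq hp⟩

lemma cExp_negGradX (hinj : InjOn (fun y' => negGradX c x y') Λ) (hy : y ∈ Λ) :
    cExp c Λ x (negGradX c x y) = y :=
  hinj.leftInvOn_invFunOn hy

lemma cExp_comp {V : Type*} [NormedAddCommGroup V] [NormedSpace ℝ V] {P : V → E} {v₀ : V}
    (hΛ : IsOpen Λ) (hy : y ∈ Λ) (hc : ContDiffAt ℝ 3 (uncurry c) (x, y))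
    (hinj : InjOn (fun y' => negGradX c x y') Λ)
    (hbij : Bijective (fderiv ℝ (fun y' => negGradX c x y') y))
    (hP : ContDiffAt ℝ 2 P v₀) (hPv₀ : P v₀ = negGradX c x y) :
    ContDiffAt ℝ 2 (fun v => cExp c Λ x (P v)) v₀ ∧
      ∀ᶠ v in 𝓝 v₀, negGradX c x (cExp c Λ x (P v)) = P v ∧ cExp c Λ x (P v) ∈ Λ := by
  have hG : ContDiffAt ℝ 2 (fun y' => negGradX c x y') y := contDiffAt_negGradX_right hc
  have hexp : ContDiffAt ℝ 2 (cExp c Λ x) (P v₀) :=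
    hPv₀ ▸ ContDiffAt.invFunOn (hΛ.mem_nhds hy) hinj hG two_ne_zero hbij
  exact ⟨hexp.comp v₀ hP, (hPv₀ ▸ hP.continuousAt.tendsto).eventually
    (eventually_apply_invFunOn (hΛ.mem_nhds hy) hG two_ne_zero hbij)⟩

lemma cSectional_eq_neg_deriv_deriv {u ξ : E}
    (hc : ∀ᶠ t in 𝓝 0, ContDiffAt ℝ 2 (uncurry c) (x, cLine c Λ x y ξ t)) :
    cSectional c Λ x y u ξ = -deriv (deriv fun t =>
      dirDeriv (u, 0) (dirDeriv (u, 0) (uncurry c)) (x, cLine c Λ x y ξ t)) 0 := by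
  have h : (fun t => -iteratedFDeriv ℝ 2 (fun x' => c x' (cLine c Λ x y ξ t)) x ![u, u])
      =ᶠ[𝓝 0] fun t => -dirDeriv (u, 0) (dirDeriv (u, 0) (uncurry c)) (x, cLine c Λ x y ξ t) :=
    hc.mono fun t h => by simp only [iteratedFDeriv_two_cost_left h]
  rw [cSectional, ← deriv_deriv_neg]
  exact h.deriv.deriv_eq

end CExp

section Regular

variable {c : EuclideanSpace ℝ (Fin n) → EuclideanSpace ℝ (Fin n) → ℝ}
  {Ω Λ : Set (EuclideanSpace ℝ (Fin n))} {x y : EuclideanSpace ℝ (Fin n)}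
  {V : Type*} [NormedAddCommGroup V] [NormedSpace ℝ V] {v₀ : V}

lemma cExp_comp_of_regular {P : V → E} (hΩ : IsOpen Ω) (hΛ : IsOpen Λ) (h0 : A0 c Ω Λ)
    (h1 : A1 c Ω Λ) (h2 : A2 c Ω Λ) (hx : x ∈ Ω) (hy : y ∈ Λ) (hP : ContDiffAt ℝ 2 P v₀)
    (hPv₀ : P v₀ = negGradX c x y) :
    ContDiffAt ℝ 2 (fun v => cExp c Λ x (P v)) v₀ ∧
      ∀ᶠ v in 𝓝 v₀, negGradX c x (cExp c Λ x (P v)) = P v ∧ cExp c Λ x (P v) ∈ Λ :=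
  cExp_comp hΛ hy ((h0.contDiffAt hΩ hΛ hx hy).of_le (by norm_num))
    ((h1.1 x hx).mono subset_closure) (h2 x (subset_closure hx) y (subset_closure hy)) hP hPv₀

lemma cStarExp_comp_of_regular {P : V → E} (hΩ : IsOpen Ω) (hΛ : IsOpen Λ) (h0 : A0 c Ω Λ)
    (h1 : A1 c Ω Λ) (h2 : A2 c Ω Λ) (hx : x ∈ Ω) (hy : y ∈ Λ) (hP : ContDiffAt ℝ 2 P v₀)
    (hPv₀ : P v₀ = negGradY c x y) :
    ContDiffAt ℝ 2 (fun v => cExp (cStar c) Ω y (P v)) v₀ ∧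
      ∀ᶠ v in 𝓝 v₀, negGradY c (cExp (cStar c) Ω y (P v)) y = P v ∧
        cExp (cStar c) Ω y (P v) ∈ Ω := by
  have hc := h0.contDiffAt hΩ hΛ hx hy
  exact cExp_comp hΩ hx (hc.uncurry_cStar.of_le (by norm_num))
    ((h1.2 y hy).mono subset_closure)
    (bijective_fderiv_negGradY_left (hc.of_le (by norm_num))
      (h2 x (subset_closure hx) y (subset_closure hy))) hP hPv₀

lemma cStarExp_line_of_regular {q w : E} {xw : E → E} (hΩ : IsOpen Ω) (hΛ : IsOpen Λ)
    (h0 : A0 c Ω Λ) (h1 : A1 c Ω Λ) (h2 : A2 c Ω Λ) (hy : y ∈ Λ)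
    (hxw : ∀ w', xw w' = cExp (cStar c) Ω y (q + w')) (hw : xw w ∈ Ω)
    (hq : negGradY c (xw w) y = q + w) (η : E) :
    ContDiffAt ℝ 2 (fun s : ℝ => xw (w + s • η)) 0 ∧
      deriv (fun s : ℝ => xw (w + s • η)) 0 = fderiv ℝ xw w η ∧
      ∀ᶠ s : ℝ in 𝓝 0, negGradY c (xw (w + s • η)) y = (q + w) + s • η ∧ xw (w + s • η) ∈ Ω := by
  obtain ⟨hxw', -⟩ := cStarExp_comp_of_regular (P := (q + ·)) hΩ hΛ h0 h1 h2 hw hy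
    (by fun_prop) hq.symm
  obtain ⟨hX, hline⟩ := cStarExp_comp_of_regular (P := fun s : ℝ => q + (w + s • η)) (v₀ := 0)
    hΩ hΛ h0 h1 h2 hw hy (by fun_prop) (by simpa using hq.symm)
  simp only [← hxw] at hxw' hX hline
  exact ⟨hX, (hxw'.differentiableAt two_ne_zero).lineDeriv_eq_fderiv,
    hline.mono fun _ h => ⟨h.1.trans (add_assoc ..).symm, h.2⟩⟩

lemma cLine_of_regular (hΩ : IsOpen Ω) (hΛ : IsOpen Λ) (h0 : A0 c Ω Λ) (h1 : A1 c Ω Λ)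
    (h2 : A2 c Ω Λ) (hx : x ∈ Ω) (hy : y ∈ Λ) (ξ : E) :
    ContDiffAt ℝ 2 (cLine c Λ x y ξ) 0 ∧ cLine c Λ x y ξ 0 = y ∧
      ∀ᶠ t in 𝓝 0, negGradX c x (cLine c Λ x y ξ t) = negGradX c x y + t • ξ ∧
        cLine c Λ x y ξ t ∈ Λ := by
  obtain ⟨hY, hline⟩ := cExp_comp_of_regular (P := fun t : ℝ => negGradX c x y + t • ξ) (v₀ := 0)
    hΩ hΛ h0 h1 h2 hx hy (by fun_prop) (by simp)
  refine ⟨hY, ?_, hline⟩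
  rw [cLine, zero_smul, add_zero, cExp_negGradX ((h1.1 x hx).mono subset_closure) hy]

lemma deriv_cLine_of_regular (hΩ : IsOpen Ω) (hΛ : IsOpen Λ) (h0 : A0 c Ω Λ) (h1 : A1 c Ω Λ)
    (h2 : A2 c Ω Λ) (hx : x ∈ Ω) (hy : y ∈ Λ) (v : E) :
    deriv (cLine c Λ x y (fderiv ℝ (fun y' => negGradX c x y') y v)) 0 = v := by
  obtain ⟨hY, hY₀, hline⟩ := cLine_of_regular hΩ hΛ h0 h1 h2 hx hy
    (fderiv ℝ (fun y' => negGradX c x y') y v)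
  have hG : DifferentiableAt ℝ (fun y' => negGradX c x y') y :=
    (contDiffAt_negGradX_right (k := 1) ((h0.contDiffAt hΩ hΛ hx hy).of_le (by norm_num))
      ).differentiableAt one_ne_zero
  exact (h2 x (subset_closure hx) y (subset_closure hy)).1
    (HasDerivAt.fderiv_apply_eq_of_eventually_eq_line (hY.differentiableAt two_ne_zero).hasDerivAt
      hY₀ hG (hline.mono fun _ h => h.1))

end Regular

section SlidingMountain

variable {c : EuclideanSpace ℝ (Fin n) → EuclideanSpace ℝ (Fin n) → ℝ}

lemma deriv_deriv_neg_cost_add_cost {Y : ℝ → E} {t : ℝ} {x x' : E} (hY : ContDiffAt ℝ 2 Y t)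
    (hx : ContDiffAt ℝ 2 (uncurry c) (x, Y t)) (hx' : ContDiffAt ℝ 2 (uncurry c) (x', Y t)) :
    deriv (deriv fun s => -c x (Y s) + c x' (Y s)) t =
      -(dirDeriv (0, deriv Y t) (dirDeriv (0, deriv Y t) (uncurry c)) (x, Y t) -
          ⟪negGradY c x (Y t), deriv (deriv Y) t⟫) +
        (dirDeriv (0, deriv Y t) (dirDeriv (0, deriv Y t) (uncurry c)) (x', Y t) -
          ⟪negGradY c x' (Y t), deriv (deriv Y) t⟫) := by
  have h₁ : ContDiffAt ℝ 2 (fun s => c x (Y s)) t :=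
    ContDiffAt.comp (g := uncurry c) t hx (contDiffAt_const.prodMk hY)
  have h₂ : ContDiffAt ℝ 2 (fun s => c x' (Y s)) t :=
    ContDiffAt.comp (g := uncurry c) t hx' (contDiffAt_const.prodMk hY)
  rw [← deriv_deriv_cost_right hY hx, ← deriv_deriv_cost_right hY hx']
  simp only [deriv_deriv_eq_iteratedDeriv_two]
  rw [iteratedDeriv_fun_add h₁.neg h₂, iteratedDeriv_fun_neg]

lemma deriv_deriv_deriv_deriv_neg_cost_add_cost {X Y : ℝ → E} {t : ℝ} {x₀ x' p η : E}
    (hX : ContDiffAt ℝ 2 X 0) (hX₀ : X 0 = x₀) (hY : ContDiffAt ℝ 2 Y t)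
    (hc : ContDiffAt ℝ 4 (uncurry c) (x₀, Y t))
    (hx' : ContDiffAt ℝ 2 (uncurry c) (x', Y t))
    (hXline : ∀ᶠ s in 𝓝 0, negGradY c (X s) (Y t) = p + s • η) :
    deriv (deriv fun s => deriv (deriv fun τ => -c (X s) (Y τ) + c x' (Y τ)) t) 0 =
      -deriv (deriv fun s =>
        dirDeriv (0, deriv Y t) (dirDeriv (0, deriv Y t) (uncurry c)) (X s, Y t)) 0 := by
  subst hX₀
  set v : E × E := (0, deriv Y t)
  have hpath : ContDiffAt ℝ 2 (fun s => (X s, Y t)) 0 := hX.prodMk contDiffAt_const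
  have hc2 : ∀ᶠ s in 𝓝 0, ContDiffAt ℝ 2 (uncurry c) (X s, Y t) :=
    hpath.continuousAt.eventually ((hc.eventually (by simp)).mono fun _ h => h.of_le (by norm_num))
  have hHess : ContDiffAt ℝ 2 (fun s => dirDeriv v (dirDeriv v (uncurry c)) (X s, Y t)) 0 :=
    ContDiffAt.comp (g := dirDeriv v (dirDeriv v (uncurry c))) 0
      ((hc.dirDeriv (k := 3) (by norm_num) v).dirDeriv (by norm_num) v) hpath
  have h : (fun s => deriv (deriv fun τ => -c (X s) (Y τ) + c x' (Y τ)) t) =ᶠ[𝓝 0]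
      fun s => -dirDeriv v (dirDeriv v (uncurry c)) (X s, Y t) +
        ((dirDeriv v (dirDeriv v (uncurry c)) (x', Y t) - ⟪negGradY c x' (Y t), deriv (deriv Y) t⟫
          + ⟪p, deriv (deriv Y) t⟫) + s * ⟪η, deriv (deriv Y) t⟫) := by
    filter_upwards [hc2, hXline] with s hs hline
    rw [deriv_deriv_neg_cost_add_cost hY hs hx', hline, inner_add_left, real_inner_smul_left]
    ring
  rw [h.deriv.deriv_eq, deriv_deriv_add_affine hHess.neg, deriv_deriv_neg]

end SlidingMountain

theorem statement11_general (c : E → E → ℝ) (Ω Λ : Set E) (hΩ : IsOpen Ω) (hΛ : IsOpen Λ)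
    (h0 : A0 c Ω Λ) (h1 : A1 c Ω Λ) (h2 : A2 c Ω Λ)
    (xm : E) (hxm : xm ∈ Ω) (y₀ : E) (y₁ : E)
    (hseg : segInTarget c Λ xm y₀ y₁) (θ : ℝ) (hθ : θ ∈ Set.Icc (0:ℝ) 1)
    (yθ : E) (hyθ : yθ = ySeg c Λ xm y₀ y₁ θ)
    (qθ : E)
    (ydot : E) (hydot : ydot = deriv (fun θ' => ySeg c Λ xm y₀ y₁ θ') θ)
    (xw : E → E) (hxw : ∀ w : E, xw w = cExp (cStar c) Ω yθ (qθ + w))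
    (pdot : E → E)
    (hpdot : ∀ x : E, pdot x = deriv (fun θ' => negGradX c x (ySeg c Λ xm y₀ y₁ θ')) θ)
    (F : E → ℝ)
    (hF : ∀ w : E, F w = deriv (deriv (fun θ' => slide c Λ xm y₀ y₁ θ' (xw w))) θ) :
    ∀ w : E, ⟪w, ydot⟫ = 0 → qθ + w ∈ cExpDom (cStar c) Ω yθ →
      ∀ η : E, ⟪η, ydot⟫ = 0 →
        deriv (deriv (fun s : ℝ => F (w + s • η))) 0
          = cSectional c Λ (xw w) yθ (fderiv ℝ xw w η) (pdot (xw w)) := by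
  intro w _ hwdom η _
  obtain ⟨hyθΛ, hpθ⟩ : yθ ∈ Λ ∧ negGradX c xm yθ = pSeg c xm y₀ y₁ θ :=
    hyθ ▸ mem_and_negGradX_cExp (hseg θ hθ)
  obtain ⟨hxΩ, hqx⟩ : xw w ∈ Ω ∧ negGradY c (xw w) yθ = qθ + w :=
    hxw w ▸ mem_and_negGradX_cExp hwdom
  have hC : ∀ x ∈ Ω, ∀ y ∈ Λ, ContDiffAt ℝ 4 (uncurry c) (x, y) :=
    fun x hx y hy => h0.contDiffAt hΩ hΛ hx hy
  obtain ⟨hY₁, -⟩ : ContDiffAt ℝ 2 (ySeg c Λ xm y₀ y₁) θ ∧ _ := cExp_comp_of_regular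
    (P := pSeg c xm y₀ y₁) hΩ hΛ h0 h1 h2 hxm hyθΛ (by unfold pSeg; fun_prop) hpθ.symm
  obtain ⟨hX, hXd, hXline⟩ := cStarExp_line_of_regular hΩ hΛ h0 h1 h2 hyθΛ hxw hxΩ hqx η
  obtain ⟨hY, hY₀, hYline⟩ := cLine_of_regular hΩ hΛ h0 h1 h2 hxΩ hyθΛ (pdot (xw w))
  have hξ : pdot (xw w) = fderiv ℝ (fun y' => negGradX c (xw w) y') yθ ydot := by
    rw [hpdot, hydot, hyθ]
    exact deriv_negGradX_comp (hyθ ▸ (hC _ hxΩ _ hyθΛ).of_le (by norm_num))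
      (hY₁.differentiableAt two_ne_zero)
  have hLHS : deriv (deriv fun s : ℝ => F (w + s • η)) 0 = -deriv (deriv fun s : ℝ =>
      dirDeriv (0, ydot) (dirDeriv (0, ydot) (uncurry c)) (xw (w + s • η), yθ)) 0 := by
    simp only [hF]
    subst hyθ hydot
    exact deriv_deriv_deriv_deriv_neg_cost_add_cost hX (by simp) hY₁ (hC _ hxΩ _ hyθΛ)
      ((hC _ hxm _ hyθΛ).of_le (by norm_num)) (hXline.mono fun _ h => h.1)
  rw [hLHS, cSectional_eq_neg_deriv_deriv
    (hYline.mono fun t h => (hC _ hxΩ _ h.2).of_le (by norm_num)), neg_inj]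
  exact deriv_deriv_hessian_swap hX hY (by simp) hY₀ hXd
    (hξ ▸ deriv_cLine_of_regular hΩ hΛ h0 h1 h2 hxΩ hyθΛ ydot) (hC _ hxΩ _ hyθΛ)
    (deriv_deriv_dirDeriv_eq_zero_of_negGradY_line (hXline.mono fun _ h =>
      ⟨h.1, (hC _ h.2 _ hyθΛ).differentiableAt (by norm_num)⟩))
    (deriv_deriv_dirDeriv_eq_zero_of_negGradX_line (hYline.mono fun _ h =>
      ⟨h.1, (hC _ hxΩ _ h.2).differentiableAt (by norm_num)⟩))

theorem statement11 (c : E → E → ℝ) (Ω Λ : Set E) (hΩ : IsOpen Ω) (hΛ : IsOpen Λ)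
    (h0 : A0 c Ω Λ) (h1 : A1 c Ω Λ) (h2 : A2 c Ω Λ)
    (xm : E) (hxm : xm ∈ Ω) (y₀ : E) (hy₀ : y₀ ∈ Λ) (y₁ : E) (hy₁ : y₁ ∈ Λ)
    (hseg : segInTarget c Λ xm y₀ y₁) (θ : ℝ) (hθ : θ ∈ Set.Icc (0:ℝ) 1)
    (yθ : E) (hyθ : yθ = ySeg c Λ xm y₀ y₁ θ)
    (qθ : E) (hqθ : qθ = negGradY c xm yθ)
    (ydot : E) (hydot : ydot = deriv (fun θ' => ySeg c Λ xm y₀ y₁ θ') θ)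
    (xw : E → E) (hxw : ∀ w : E, xw w = cExp (cStar c) Ω yθ (qθ + w))
    (pdot : E → E)
    (hpdot : ∀ x : E, pdot x = deriv (fun θ' => negGradX c x (ySeg c Λ xm y₀ y₁ θ')) θ)
    (F : E → ℝ)
    (hF : ∀ w : E, F w = deriv (deriv (fun θ' => slide c Λ xm y₀ y₁ θ' (xw w))) θ) :
    ∀ w : E, ⟪w, ydot⟫ = 0 → qθ + w ∈ cExpDom (cStar c) Ω yθ →
      ∀ η : E, ⟪η, ydot⟫ = 0 →
        deriv (deriv (fun s : ℝ => F (w + s • η))) 0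
          = cSectional c Λ (xw w) yθ (fderiv ℝ xw w η) (pdot (xw w)) :=
  statement11_general c Ω Λ hΩ hΛ h0 h1 h2 xm hxm y₀ y₁ hseg θ hθ yθ hyθ qθ ydot hydot xw hxw pdot
    hpdot F hF

end
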